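/- arXiv:1608.03524 — 4 statements merged into one kernel-verified Lean document; each statement's English description precedes it below -/
import Mathlib

section
/- Let φ : ℝ → ℝ be continuous and compactly supported, with Fourier transform φ̂. If the 2π-periodization Π_φ(x) = ∑_{α ∈ ℤ} |φ̂(x + 2πα)|² is strictly positive for all x, and φ satisfies the refinement relation φ̂(x) = (1/g)·p(e^{-ix/g})·φ̂(x/g) for a trigonometric polynomial p and integer g ≥ 2, then ∑_{j=0}^{g-1} |p(e^{-i(x+2πj)/g})|² > 0 for all x ∈ ℝ. -/
/-!
Choose `α` with `φ̂ (x + 2πα) ≠ 0`, possible since `Π_φ x > 0`. The refinement relation at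
`x + 2πα` forces `p` not to vanish at `(x + 2πα)/g`, and reducing `α` modulo `g` moves this
point by a multiple of `2π`, onto one of the `g` points `(x + 2πj)/g` of the sum.
-/

open Real Finset

theorem trigPolynomial_periodic (s : Finset ℤ) (c : ℤ → ℂ) :
    Function.Periodic (fun x : ℝ => ∑ α ∈ s, c α * Complex.exp (-Complex.I * (α : ℂ) * x))
      (2 * π) := by
  intro x
  refine Finset.sum_congr rfl fun α _ => ?_
  have hshift : -Complex.I * (α : ℂ) * ((x + 2 * π : ℝ) : ℂ)
      = -Complex.I * (α : ℂ) * (x : ℝ) + ((-α : ℤ) : ℂ) * (2 * π * Complex.I) := by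
    push_cast; ring
  rw [hshift, Complex.exp_add, Complex.exp_int_mul_two_pi_mul_I, mul_one]

theorem Function.Periodic.apply_add_mul_div_eq_emod {β : Type*} {f : ℝ → β} {T : ℝ}
    (hf : Function.Periodic f T) (x : ℝ) (g : ℕ) (α : ℤ) :
    f ((x + T * α) / g) = f ((x + T * (α % (g : ℤ) : ℤ)) / g) := by
  rcases eq_or_ne g 0 with rfl | hg
  · simp
  have hα : (α : ℝ) = g * (α / (g : ℤ) : ℤ) + (α % (g : ℤ) : ℤ) := by
    exact_mod_cast (Int.mul_ediv_add_emod α g).symm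
  have hshift : (x + T * α) / g = (x + T * (α % (g : ℤ) : ℤ)) / g + (α / (g : ℤ) : ℤ) * T := by
    rw [hα]; field_simp; ring
  rw [hshift, hf.int_mul]

theorem exists_ne_zero_of_tsum_ne_zero {ι M : Type*} [AddCommMonoid M] [TopologicalSpace M]
    {f : ι → M} (h : ∑' i, f i ≠ 0) : ∃ i, f i ≠ 0 := by
  by_contra! hf
  exact h (by simp [hf])

theorem stmt11_general (g : ℕ)
    (φhat : ℝ → ℂ)
    (P : ℝ → ℂ) (s : Finset ℤ) (c : ℤ → ℂ)
    (hP : ∀ x : ℝ, P x = ∑ α ∈ s, c α * Complex.exp (-Complex.I * (α : ℂ) * x))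
    (hPi : ∀ x : ℝ, 0 < ∑' α : ℤ, ‖φhat (x + 2 * π * α)‖ ^ 2)
    (href : ∀ x : ℝ, φhat x = (1 / g) * P (x / g) * φhat (x / g)) :
    ∀ x : ℝ, 0 < ∑ j ∈ Finset.range g, ‖P ((x + 2 * π * j) / g)‖ ^ 2 := by
  intro x
  obtain ⟨α, hα⟩ := exists_ne_zero_of_tsum_ne_zero (hPi x).ne'
  have hφ : φhat (x + 2 * π * α) ≠ 0 := by simpa using hα
  rw [href] at hφ
  obtain ⟨hg, hPα⟩ := mul_ne_zero_iff.mp (mul_ne_zero_iff.mp hφ).1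
  have hperiodic : Function.Periodic P (2 * π) := by
    simpa only [← funext hP] using trigPolynomial_periodic s c
  have hgpos : 0 < (g : ℤ) := by simpa [Nat.pos_iff_ne_zero] using hg
  rw [hperiodic.apply_add_mul_div_eq_emod] at hPα
  set r := α % (g : ℤ)
  have hr0 : 0 ≤ r := Int.emod_nonneg α hgpos.ne'
  have hrg : r < g := Int.emod_lt_of_pos α hgpos
  have hcast : ((r.toNat : ℕ) : ℝ) = (r : ℝ) := by exact_mod_cast Int.toNat_of_nonneg hr0
  refine Finset.sum_pos' (fun j _ => by positivity) ⟨r.toNat, mem_range.mpr (by omega), ?_⟩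
  rw [hcast]
  positivity

theorem stmt11 (g : ℕ) (hg : 2 ≤ g) (φ : ℝ → ℝ) (hcont : Continuous φ)
    (hsupp : HasCompactSupport φ)
    (φhat : ℝ → ℂ)
    (hhat : ∀ x : ℝ, φhat x = ∫ t : ℝ, (φ t : ℂ) * Complex.exp (-Complex.I * t * x))
    (P : ℝ → ℂ) (s : Finset ℤ) (c : ℤ → ℂ)
    (hP : ∀ x : ℝ, P x = ∑ α ∈ s, c α * Complex.exp (-Complex.I * (α : ℂ) * x))
    (hPi : ∀ x : ℝ, 0 < ∑' α : ℤ, ‖φhat (x + 2 * π * α)‖ ^ 2)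
    (href : ∀ x : ℝ, φhat x = (1 / g) * P (x / g) * φhat (x / g)) :
    ∀ x : ℝ, 0 < ∑ j ∈ Finset.range g, ‖P ((x + 2 * π * j) / g)‖ ^ 2 :=
  stmt11_general g φhat P s c hP hPi href
end

section
/- Let g ≥ 2, n = gN, f and p trigonometric polynomials, A_n = C_n(f) the circulant matrix with symbol f, and P_n = C_n(p)·K_{n,g}^T. Then P_n^H A_n P_n = C_N(f₁), where f₁(x) = (1/g) · ∑_{j=0}^{g-1} f(x/g + 2πj/g)·|p(x/g + 2πj/g)|². -/
open Real Finset Matrix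

/-- The `m × m` Fourier matrix. -/
noncomputable def fourierM (m : ℕ) : Matrix (Fin m) (Fin m) ℂ := fun r s =>
  (1 / Real.sqrt m) * Complex.exp (-2 * Real.pi * Complex.I * ((r : ℕ) : ℂ) * ((s : ℕ) : ℂ) / m)

/-- The `m × m` circulant matrix with symbol `h`, i.e. the matrix diagonalized by the Fourier
matrix with eigenvalues `h (2πr/m)`. -/
noncomputable def circ (m : ℕ) (h : ℝ → ℂ) : Matrix (Fin m) (Fin m) ℂ :=
  fourierM m * Matrix.diagonal (fun r : Fin m => h (2 * Real.pi * (r : ℕ) / m)) * (fourierM m)ᴴ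

/-- A trigonometric polynomial `ℝ → ℂ`. -/
def TrigPoly (h : ℝ → ℂ) : Prop :=
  ∃ (d : ℕ) (a : ℤ → ℂ), ∀ x : ℝ,
    h x = ∑ j ∈ Finset.Icc (-(d : ℤ)) (d : ℤ), a j * Complex.exp (Complex.I * (j : ℂ) * x)

/-!
Since the Fourier matrix is unitary, circulant matrices form a `*`-closed commutative algebra
with `C(h₁) C(h₂) = C(h₁ h₂)` and `C(h)ᴴ = C(conj h)`, so `Pᴴ A P = K C_n(|p|² f) Kᵀ`.
Conjugating by `K` keeps the entries of `C_n(|p|² f)` at the indices `(g r, g r')`. Writing the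
`n`-point Fourier sum over `s = t + N j` with `t < N`, `j < g`, the phase at `s` coincides with
the `N`-point phase at `t` (they differ by a multiple of `2π`), so the `g` samples of the symbol
aliased to the same `t` add up to `g · f₁(2πt/N)`.
-/

open Complex

lemma sum_exp_two_pi_mul_I_int_mul_div (m : ℕ) (k : ℤ) :
    ∑ t : Fin m, exp (2 * π * I * k * t / m) = if (m : ℤ) ∣ k then (m : ℂ) else 0 := by
  rcases Nat.eq_zero_or_pos m with rfl | hm
  · simp
  set ζ := exp (2 * π * I / m)
  have hζ : IsPrimitiveRoot ζ m := isPrimitiveRoot_exp m hm.ne'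
  have hterm (t : ℕ) : exp (2 * π * I * k * t / m) = (ζ ^ k) ^ t := by
    rw [← Complex.exp_int_mul, ← Complex.exp_nat_mul]; ring_nf
  simp_rw [hterm, Fin.sum_univ_eq_sum_range (fun t => (ζ ^ k) ^ t)]
  split_ifs with hk
  · simp [(hζ.zpow_eq_one_iff_dvd k).mpr hk]
  · have hk1 : ζ ^ k ≠ 1 := mt (hζ.zpow_eq_one_iff_dvd k).mp hk
    have hkm : (ζ ^ k) ^ m = 1 := by
      rw [← zpow_natCast, ← _root_.zpow_mul, mul_comm, _root_.zpow_mul, zpow_natCast,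
        hζ.pow_eq_one, _root_.one_zpow]
    rw [geom_sum_eq hk1, hkm, sub_self, zero_div]

lemma star_fourierM_mul_fourierM (m : ℕ) (t a b : Fin m) :
    star (fourierM m t a) * fourierM m t b =
      exp (2 * π * I * (((a : ℕ) - (b : ℕ) : ℤ) : ℂ) * t / m) / m := by
  have hsqrt : (1 / ((Real.sqrt m : ℝ) : ℂ)) * (1 / (Real.sqrt m : ℝ)) = 1 / m := by
    rw [div_mul_div_comm, one_mul, ← ofReal_mul, Real.mul_self_sqrt m.cast_nonneg, ofReal_natCast]
  simp only [fourierM, star_mul', star_div₀, star_one, ← exp_conj, Complex.star_def, conj_ofReal]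
  rw [mul_mul_mul_comm, hsqrt, ← Complex.exp_add, one_div_mul_eq_div]
  congr 2
  simp only [map_div₀, map_mul, map_neg, conj_I, conj_ofReal, conj_natCast, map_ofNat]
  push_cast
  ring

lemma fourierM_conjTranspose_mul_self (m : ℕ) : (fourierM m)ᴴ * fourierM m = 1 := by
  ext r s
  have hm : (m : ℂ) ≠ 0 := Nat.cast_ne_zero.mpr r.pos.ne'
  simp only [mul_apply, conjTranspose_apply, star_fourierM_mul_fourierM, ← Finset.sum_div,
    sum_exp_two_pi_mul_I_int_mul_div, one_apply]
  have hdvd : (m : ℤ) ∣ (r : ℕ) - (s : ℕ) ↔ r = s := by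
    refine ⟨fun h => Fin.ext ?_, fun h => by simp [h]⟩
    have := Int.eq_zero_of_abs_lt_dvd h (abs_sub_lt_iff.mpr (by omega))
    omega
  split_ifs <;> simp_all

lemma fourierM_apply_comm (m : ℕ) (r s : Fin m) : fourierM m r s = fourierM m s r := by
  simp only [fourierM]; ring_nf

lemma circ_apply (m : ℕ) (h : ℝ → ℂ) (a b : Fin m) :
    circ m h a b = (∑ t : Fin m,
      h (2 * π * (t : ℕ) / m) * exp (2 * π * I * (((b : ℕ) - (a : ℕ) : ℤ) : ℂ) * t / m)) / m := by
  rw [circ, mul_apply]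
  simp only [mul_diagonal, conjTranspose_apply, Finset.sum_div]
  refine Finset.sum_congr rfl fun t _ => ?_
  rw [fourierM_apply_comm m a, fourierM_apply_comm m b, mul_div_assoc (h _),
    ← star_fourierM_mul_fourierM]
  ring

lemma circ_conjTranspose (m : ℕ) (h : ℝ → ℂ) : (circ m h)ᴴ = circ m (fun x => star (h x)) := by
  simp only [circ, conjTranspose_mul, conjTranspose_conjTranspose, diagonal_conjTranspose,
    Matrix.mul_assoc]
  rfl

lemma circ_mul_circ (m : ℕ) (h₁ h₂ : ℝ → ℂ) :
    circ m h₁ * circ m h₂ = circ m (fun x => h₁ x * h₂ x) := by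
  simp only [circ, Matrix.mul_assoc, ← Matrix.mul_assoc (fourierM m)ᴴ,
    fourierM_conjTranspose_mul_self, Matrix.one_mul]
  rw [← Matrix.mul_assoc (diagonal _), diagonal_mul_diagonal]

lemma one_submatrix_mul_mul_transpose {l n α : Type*} [Fintype n] [DecidableEq n]
    [NonAssocSemiring α] (e : l → n) (M : Matrix n n α) :
    (1 : Matrix n n α).submatrix e id * M * ((1 : Matrix n n α).submatrix e id)ᵀ =
      M.submatrix e e := by
  ext
  simp [mul_apply, one_apply]

def Fin.mulLeft {g : ℕ} (hg : 0 < g) (N : ℕ) (r : Fin N) : Fin (g * N) :=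
  ⟨g * r, Nat.mul_lt_mul_of_pos_left r.isLt hg⟩

lemma circ_apply_mulLeft {g : ℕ} (hg : 0 < g) (N : ℕ) (q : ℝ → ℂ) (r r' : Fin N) :
    circ (g * N) q (Fin.mulLeft hg N r) (Fin.mulLeft hg N r') =
      circ N (fun x => (1 / g) * ∑ j ∈ Finset.range g, q (x / g + 2 * π * j / g)) r r' := by
  have hgR : (g : ℝ) ≠ 0 := by positivity
  have hNR : (N : ℝ) ≠ 0 := Nat.cast_ne_zero.mpr r.pos.ne'
  have hgC : (g : ℂ) ≠ 0 := by exact_mod_cast hgR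
  have hNC : (N : ℂ) ≠ 0 := by exact_mod_cast hNR
  have hterm (j : Fin g) (t : Fin N) :
      q (2 * π * ((t : ℕ) + N * (j : ℕ) : ℕ) / (g * N : ℕ)) *
        exp (2 * π * I * (((g * r' : ℕ) - (g * r : ℕ) : ℤ) : ℂ) * ((t : ℕ) + N * (j : ℕ) : ℕ) /
          (g * N : ℕ)) =
      q (2 * π * t / N / g + 2 * π * j / g) *
        exp (2 * π * I * (((r' : ℕ) - (r : ℕ) : ℤ) : ℂ) * t / N) := by
    have harg : 2 * π * (((t : ℕ) + N * (j : ℕ) : ℕ) : ℝ) / (g * N : ℕ) =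
        2 * π * t / N / g + 2 * π * j / g := by
      push_cast; field_simp
    have hexp : 2 * π * I * (((g * r' : ℕ) - (g * r : ℕ) : ℤ) : ℂ) *
          ((t : ℕ) + N * (j : ℕ) : ℕ) / (g * N : ℕ) =
        2 * π * I * (((r' : ℕ) - (r : ℕ) : ℤ) : ℂ) * t / N +
          (((r' : ℕ) - (r : ℕ)) * (j : ℕ) : ℤ) * (2 * π * I) := by
      push_cast; field_simp
    rw [harg, hexp, Complex.exp_add, exp_int_mul_two_pi_mul_I, mul_one]
  rw [circ_apply, circ_apply, ← finProdFinEquiv.sum_comp, Fintype.sum_prod_type, Finset.sum_comm]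
  simp only [Fin.mulLeft, finProdFinEquiv_apply_val, hterm,
    ← Fin.sum_univ_eq_sum_range (fun j => q (_ + 2 * π * j / g)), Finset.sum_mul, Finset.mul_sum, Finset.sum_div]
  refine Finset.sum_congr rfl fun t _ => Finset.sum_congr rfl fun j _ => ?_
  push_cast
  field_simp

theorem stmt16_general (g N : ℕ) (hg : 2 ≤ g) (f p : ℝ → ℂ) :
    let n := g * N
    let K : Matrix (Fin N) (Fin n) ℂ := fun r s => if (s : ℕ) = g * (r : ℕ) then 1 else 0
    let P : Matrix (Fin n) (Fin N) ℂ := circ n p * Kᵀ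
    Pᴴ * circ n f * P = circ N (fun x => (1 / g) * ∑ j ∈ Finset.range g,
      f (x / g + 2 * π * j / g) * ((‖p (x / g + 2 * π * j / g)‖ : ℝ) : ℂ) ^ 2) := by
  intro n K P
  have hg₀ : 0 < g := by omega
  have hK : K = (1 : Matrix (Fin n) (Fin n) ℂ).submatrix (Fin.mulLeft hg₀ N) id := by
    ext r s
    simp [K, Fin.mulLeft, one_apply, Fin.ext_iff, eq_comm]
  have hsandwich : Pᴴ * circ n f * P = K * circ n (fun x => star (p x) * f x * p x) * Kᵀ := by
    simp only [P, hK, conjTranspose_mul, transpose_submatrix, conjTranspose_submatrix,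
      transpose_one, conjTranspose_one, circ_conjTranspose, ← circ_mul_circ, Matrix.mul_assoc]
  have hsymbol (θ : ℝ) : star (p θ) * f θ * p θ = f θ * ((‖p θ‖ : ℝ) : ℂ) ^ 2 := by
    rw [← Complex.ofReal_pow, ← Complex.normSq_eq_norm_sq, Complex.normSq_eq_conj_mul_self,
      ← Complex.star_def]
    ring
  ext r r'
  rw [hsandwich, hK, one_submatrix_mul_mul_transpose, submatrix_apply, circ_apply_mulLeft]
  simp only [hsymbol]

theorem stmt16 (g N : ℕ) (hg : 2 ≤ g) (hN : 0 < N) (f p : ℝ → ℂ)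
    (hf : TrigPoly f) (hp : TrigPoly p) :
    let n := g * N
    let K : Matrix (Fin N) (Fin n) ℂ := fun r s => if (s : ℕ) = g * (r : ℕ) then 1 else 0
    let P : Matrix (Fin n) (Fin N) ℂ := circ n p * Kᵀ
    Pᴴ * circ n f * P = circ N (fun x => (1 / g) * ∑ j ∈ Finset.range g,
      f (x / g + 2 * π * j / g) * ((‖p (x / g + 2 * π * j / g)‖ : ℝ) : ℂ) ^ 2) :=
  stmt16_general g N hg f p
end

section
/- Let f, p be real trigonometric polynomials with f(x₀) = 0 and f(x) > 0 for x ∈ [0, 2π) \ {x₀}. Suppose (i) for each y ∈ M_g(x₀) = {x₀ + 2πj/g mod 2π : j = 1, …, g-1}, the limit lim_{x→x₀} |p(x + (y - x₀))|²/f(x) is finite where p vanishes appropriately (equivalently the order of the zero of |p|² at y is at least the order of the zero of f at x₀), and (ii) |p(x₀)|² > 0. Then there exists γ > 0 such that for all x ∈ [0, 2π), the g×g matrix I_g − p[x]^H p[x]/‖p[x]‖₂² ⪯ (γ/a₀)·diag(f[x]), where p[x] = (p(y₀), …, p(y_{g-1})), f[x] = (f(y₀), …, f(y_{g-1})), y_j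 = x + 2πj/g mod 2π, and a₀ = (1/2π)∫₀^{2π} f. -/
/-!
Writing `v = p[x]`, the matrix inequality says `‖w‖² - ⟪v, w⟫² / ‖v‖² ≤ K · Σⱼ f(yⱼ) wⱼ²` with
`K = γ / a₀`; the left side is the squared distance from `w` to the line `ℝ v`.
Moving `x` by `2π/g` permutes the nodes cyclically, so for a small `δ > 0` we may take
`x ∈ [x₀ - δ, x₀ - δ + 2π/g)`. If `x ≥ x₀ + δ`, all nodes stay `δ` away from `x₀` modulo `2π`,
where `f` has a positive minimum, and the distance is at most `‖w‖²`. If `x < x₀ + δ`, then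
`p(x)` is bounded away from `0` by (ii), while by (i) `|p|²` at the other nodes is `O(f(x))`;
comparing `w` with the point `(w₀ / p(x)) • v` of the line, which agrees with `w` in the first
coordinate, bounds the distance.
-/

open Real Finset Filter Topology Function

section SqDistToLine

variable {ι : Type*} [Fintype ι]

/-- `‖w‖² - ⟪v, w⟫² / ‖v‖²`, the squared distance from `w` to the line `ℝ v`; for `v = 0` the
junk value `0⁻¹ = 0` makes it `‖w‖²`, which is still that distance. -/
noncomputable def sqDistToLine (v w : ι → ℝ) : ℝ :=
  ∑ i, w i ^ 2 - (∑ i, v i * w i) ^ 2 * (∑ i, v i ^ 2)⁻¹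

lemma sqDistToLine_le_sum_sq (v w : ι → ℝ) : sqDistToLine v w ≤ ∑ i, w i ^ 2 := by
  have : 0 ≤ (∑ i, v i * w i) ^ 2 * (∑ i, v i ^ 2)⁻¹ := by positivity
  unfold sqDistToLine
  linarith

lemma sqDistToLine_le_sum_sq_sub_smul {v : ι → ℝ} (hv : 0 < ∑ i, v i ^ 2) (w : ι → ℝ)
    (t : ℝ) :
    sqDistToLine v w ≤ ∑ i, (w i - t * v i) ^ 2 := by
  set S := ∑ i, v i ^ 2
  set d := ∑ i, v i * w i
  have expand : ∑ i, (w i - t * v i) ^ 2 = ∑ i, w i ^ 2 - 2 * t * d + t ^ 2 * S := by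
    simp only [d, S, mul_sum, ← sum_sub_distrib, ← sum_add_distrib]
    exact sum_congr rfl fun i _ => by ring
  have square : (d - t * S) ^ 2 * S⁻¹ = d ^ 2 * S⁻¹ - 2 * t * d + t ^ 2 * S := by
    field_simp
    ring
  have : 0 ≤ (d - t * S) ^ 2 * S⁻¹ := by positivity
  rw [sqDistToLine, expand]
  linarith

lemma sqDistToLine_comp_equiv {κ : Type*} [Fintype κ] (σ : κ ≃ ι) (v w : ι → ℝ) :
    sqDistToLine (v ∘ σ) (w ∘ σ) = sqDistToLine v w := by
  simp only [sqDistToLine, comp_apply, σ.sum_comp (fun i => w i ^ 2),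
    σ.sum_comp (fun i => v i * w i), σ.sum_comp (fun i => v i ^ 2)]

lemma forall_sqDistToLine_le_comp_equiv_iff {κ : Type*} [Fintype κ] (σ : κ ≃ ι)
    (v φ : ι → ℝ) (K : ℝ) :
    (∀ w, sqDistToLine (v ∘ σ) w ≤ K * ∑ k, (φ ∘ σ) k * w k ^ 2) ↔
      ∀ w, sqDistToLine v w ≤ K * ∑ i, φ i * w i ^ 2 := by
  refine ⟨fun h w => ?_, fun h w => ?_⟩
  · simpa only [sqDistToLine_comp_equiv, comp_apply, σ.sum_comp (fun i => φ i * w i ^ 2)]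
      using h (w ∘ σ)
  · have hw : (w ∘ σ.symm) ∘ σ = w := by ext; simp
    have := h (w ∘ σ.symm)
    rw [← sqDistToLine_comp_equiv σ, hw, ← σ.sum_comp (fun i => φ i * (w ∘ σ.symm) i ^ 2)]
      at this
    simpa using this

lemma sqDistToLine_le_of_forall_le {m : ℝ} (hm : 0 < m) {φ : ι → ℝ} (hφ : ∀ i, m ≤ φ i)
    (v w : ι → ℝ) : sqDistToLine v w ≤ m⁻¹ * ∑ i, φ i * w i ^ 2 := by
  refine (sqDistToLine_le_sum_sq v w).trans ?_
  rw [mul_sum]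
  refine sum_le_sum fun i _ => ?_
  rw [inv_mul_eq_div, le_div_iff₀ hm]
  nlinarith [hφ i, sq_nonneg (w i)]

end SqDistToLine

lemma sqDistToLine_le_of_pivot {n : ℕ} {v φ : Fin (n + 1) → ℝ} {a m C : ℝ} (ha : 0 < a)
    (hm : 0 < m) (hC : 0 ≤ C) (hφ : ∀ i, 0 ≤ φ i) (hv₀ : a ≤ v 0 ^ 2)
    (hφ_succ : ∀ i : Fin n, m ≤ φ i.succ) (hv_succ : ∑ i : Fin n, v i.succ ^ 2 ≤ C * φ 0)
    (w : Fin (n + 1) → ℝ) :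
    sqDistToLine v w ≤ (2 / m + 2 * C / a) * ∑ i, φ i * w i ^ 2 := by
  have hv₀pos : 0 < v 0 ^ 2 := ha.trans_le hv₀
  have hS : 0 < ∑ i, v i ^ 2 :=
    hv₀pos.trans_le
      (single_le_sum (f := fun i => v i ^ 2) (fun i _ => sq_nonneg _) (mem_univ 0))
  have hv₀ne : v 0 ≠ 0 := by
    rintro h
    simp [h] at hv₀pos
  -- `t • v` is the point of the line that agrees with `w` at `0`
  set t := w 0 / v 0
  have ht : t ^ 2 * a ≤ w 0 ^ 2 := by
    rw [div_pow, div_mul_eq_mul_div, div_le_iff₀ hv₀pos]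
    exact mul_le_mul_of_nonneg_left hv₀ (sq_nonneg _)
  have hw_succ :
      2 * ∑ i : Fin n, w i.succ ^ 2 ≤ 2 / m * ∑ i : Fin n, φ i.succ * w i.succ ^ 2 := by
    rw [mul_sum, mul_sum]
    refine sum_le_sum fun i _ => ?_
    rw [div_mul_eq_mul_div, le_div_iff₀ hm]
    nlinarith [hφ_succ i, sq_nonneg (w i.succ)]
  have hv_succ' :
      2 * t ^ 2 * ∑ i : Fin n, v i.succ ^ 2 ≤ 2 * C / a * (φ 0 * w 0 ^ 2) := by
    rw [div_mul_eq_mul_div, le_div_iff₀ ha]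
    nlinarith [mul_le_mul_of_nonneg_left hv_succ (sq_nonneg t), hφ 0,
      mul_le_mul_of_nonneg_left ht (mul_nonneg hC (hφ 0))]
  have hrest : 0 ≤ ∑ i : Fin n, φ i.succ * w i.succ ^ 2 :=
    sum_nonneg fun i _ => mul_nonneg (hφ _) (sq_nonneg _)
  have hK : 0 ≤ 2 * C / a := by positivity
  have h0 : 0 ≤ φ 0 * w 0 ^ 2 := mul_nonneg (hφ 0) (sq_nonneg _)
  calc sqDistToLine v w ≤ ∑ i, (w i - t * v i) ^ 2 := sqDistToLine_le_sum_sq_sub_smul hS w t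
    _ = ∑ i : Fin n, (w i.succ - t * v i.succ) ^ 2 := by
      rw [Fin.sum_univ_succ, div_mul_cancel₀ _ hv₀ne, sub_self, sq, zero_mul, zero_add]
    _ ≤ ∑ i : Fin n, (2 * w i.succ ^ 2 + 2 * t ^ 2 * v i.succ ^ 2) :=
      sum_le_sum fun i _ => by nlinarith [sq_nonneg (w i.succ + t * v i.succ)]
    _ = 2 * ∑ i : Fin n, w i.succ ^ 2 + 2 * t ^ 2 * ∑ i : Fin n, v i.succ ^ 2 := by
      rw [sum_add_distrib, mul_sum, mul_sum]
    _ ≤ (2 / m + 2 * C / a) * ∑ i, φ i * w i ^ 2 := by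
      rw [Fin.sum_univ_succ]
      nlinarith [mul_nonneg (by positivity : (0 : ℝ) ≤ 2 / m) h0, mul_nonneg hK hrest]

lemma continuous_of_ofReal_eq_sum_exp {q : ℝ → ℝ} {s : Finset ℤ} {a : ℤ → ℂ}
    (hq : ∀ x : ℝ, (q x : ℂ) = ∑ j ∈ s, a j * Complex.exp (Complex.I * j * x)) :
    Continuous q := by
  have : q = fun x : ℝ => (∑ j ∈ s, a j * Complex.exp (Complex.I * j * x)).re :=
    funext fun x => by rw [← hq x, Complex.ofReal_re]
  rw [this]
  fun_prop

lemma periodic_of_ofReal_eq_sum_exp {q : ℝ → ℝ} {s : Finset ℤ} {a : ℤ → ℂ}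
    (hq : ∀ x : ℝ, (q x : ℂ) = ∑ j ∈ s, a j * Complex.exp (Complex.I * j * x)) :
    Periodic q (2 * π) := by
  intro x
  apply Complex.ofReal_injective
  rw [hq, hq]
  refine sum_congr rfl fun j _ => ?_
  rw [Complex.ofReal_add, mul_add, Complex.exp_add, Complex.ofReal_mul, Complex.ofReal_ofNat,
    show Complex.I * j * (2 * π) = j * (2 * π * Complex.I) by ring,
    Complex.exp_int_mul_two_pi_mul_I, mul_one]

section Periodic

variable {f : ℝ → ℝ} {T x₀ : ℝ}

lemma Function.Periodic.pos_of_mem_Ioo (hf : Periodic f T) (hT : 0 < T)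
    (hx₀ : x₀ ∈ Set.Ico 0 T) (hpos : ∀ x ∈ Set.Ico 0 T, x ≠ x₀ → 0 < f x) {y : ℝ}
    (hy : y ∈ Set.Ioo x₀ (x₀ + T)) : 0 < f y := by
  rw [← hf.sub_zsmul_eq (toIcoDiv hT 0 y), self_sub_toIcoDiv_zsmul]
  refine hpos _ (by simpa using toIcoMod_mem_Ico hT 0 y) fun h => hy.1.ne' ?_
  -- `y` would be congruent to `x₀` modulo `T`, with both in `[x₀, x₀ + T)`
  have hx₀' : toIcoMod hT 0 x₀ = x₀ := (toIcoMod_eq_self hT).2 (by simpa using hx₀)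
  have h' := (toIcoMod_eq_toIcoMod hT (a := x₀)).2
    ((toIcoMod_eq_toIcoMod hT (a := 0)).1 (h.trans hx₀'.symm))
  rwa [(toIcoMod_eq_self hT).2 ⟨hy.1.le, hy.2⟩, (toIcoMod_eq_self hT).2 ⟨le_rfl, by linarith⟩]
    at h'

lemma Function.Periodic.nonneg_of_pos_on_Ioo (hf : Periodic f T) (hT : 0 < T) (hf₀ : f x₀ = 0)
    (hpos : ∀ y ∈ Set.Ioo x₀ (x₀ + T), 0 < f y) (y : ℝ) : 0 ≤ f y := by
  obtain ⟨z, hz, hyz⟩ := hf.exists_mem_Ico hT y x₀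
  rw [hyz]
  rcases hz.1.eq_or_lt with rfl | hlt
  · exact hf₀.ge
  · exact (hpos z ⟨hlt, hz.2⟩).le

lemma Function.Periodic.eventually_pos_nhdsNE (hf : Periodic f T) (hT : 0 < T)
    (hpos : ∀ y ∈ Set.Ioo x₀ (x₀ + T), 0 < f y) : ∀ᶠ y in 𝓝[≠] x₀, 0 < f y := by
  filter_upwards [nhdsWithin_le_nhds (Ioo_mem_nhds (by linarith : x₀ - T < x₀)
    (by linarith : x₀ < x₀ + T)), self_mem_nhdsWithin] with y hy hne
  rcases lt_or_gt_of_ne hne with hlt | hgt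
  · rw [← hf y]
    exact hpos _ ⟨by linarith [hy.1], by linarith⟩
  · exact hpos y ⟨hgt, hy.2⟩

lemma Function.Periodic.integral_pos (hf : Periodic f T) (hT : 0 < T) (hfc : Continuous f)
    (hpos : ∀ y ∈ Set.Ioo x₀ (x₀ + T), 0 < f y) : 0 < ∫ t in (0 : ℝ)..T, f t := by
  rw [← zero_add T, hf.intervalIntegral_add_eq 0 x₀]
  exact intervalIntegral.intervalIntegral_pos_of_pos_on (hfc.intervalIntegrable _ _) hpos
    (by linarith)

end Periodic

lemma eventually_le_nhds_of_nhdsNE {X : Type*} [TopologicalSpace X] {a : X} [(𝓝[≠] a).NeBot]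
    {u v : X → ℝ} (hu : ContinuousAt u a) (hv : ContinuousAt v a)
    (h : ∀ᶠ x in 𝓝[≠] a, u x ≤ v x) : ∀ᶠ x in 𝓝 a, u x ≤ v x := by
  have ha : u a ≤ v a :=
    le_of_tendsto_of_tendsto (hu.mono_left nhdsWithin_le_nhds)
      (hv.mono_left nhdsWithin_le_nhds) h
  rw [← nhdsNE_sup_pure a]
  exact eventually_sup.2 ⟨h, eventually_pure.2 ha⟩

lemma exists_eventually_sum_le_mul {ι : Type*} [Fintype ι] {u : ι → ℝ → ℝ} {f : ℝ → ℝ}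
    {x₀ : ℝ} (hu : ∀ i, ContinuousAt (u i) x₀) (hf : ContinuousAt f x₀)
    (hf_pos : ∀ᶠ x in 𝓝[≠] x₀, 0 < f x)
    (hlim : ∀ i, ∃ c, Tendsto (fun x => u i x / f x) (𝓝[≠] x₀) (𝓝 c)) :
    ∃ C > 0, ∀ᶠ x in 𝓝 x₀, ∑ i, u i x ≤ C * f x := by
  have hO : (∑ i, u i) =O[𝓝[≠] x₀] f := Asymptotics.IsBigO.sum fun i _ => by
    obtain ⟨c, hc⟩ := hlim i
    exact Asymptotics.isBigO_of_div_tendsto_nhds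
      (hf_pos.mono fun x hx h0 => absurd h0 hx.ne') c hc
  obtain ⟨C, hC, hCO⟩ := hO.exists_pos
  refine ⟨C, hC, eventually_le_nhds_of_nhdsNE (by fun_prop) (hf.const_mul C) ?_⟩
  filter_upwards [hCO.bound, hf_pos] with x hx hfx
  rw [Real.norm_of_nonneg hfx.le, Finset.sum_apply] at hx
  exact (le_abs_self _).trans hx

/-- `nodes g p x` is the paper's `p[x]`; the points `x + 2πj/g` are not reduced modulo `2π`. -/
noncomputable def nodes (g : ℕ) (u : ℝ → ℝ) (x : ℝ) : Fin g → ℝ :=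
  fun j => u (x + 2 * π * j / g)

lemma nodes_add_period {u : ℝ → ℝ} (hu : Periodic u (2 * π)) (n : ℕ) (x : ℝ) :
    nodes (n + 1) u (x + 2 * π / (n + 1)) = nodes (n + 1) u x ∘ finRotate (n + 1) := by
  funext j
  simp only [nodes, comp_apply, coe_finRotate]
  split_ifs with hj
  · subst hj
    convert hu x using 2
    · push_cast
      field_simp
      ring
    · simp
  · push_cast
    congr 1
    ring

lemma posSemidef_of_forall_sqDistToLine_le {ι : Type*} [Fintype ι] [DecidableEq ι]
    {v φ : ι → ℝ} {c : ℝ} (h : ∀ w, sqDistToLine v w ≤ c * ∑ i, φ i * w i ^ 2) :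
    (c • Matrix.diagonal φ -
      (1 - (∑ i, v i ^ 2)⁻¹ • Matrix.vecMulVec v v)).PosSemidef := by
  refine Matrix.posSemidef_iff_dotProduct_mulVec.2 ⟨?_, fun w => ?_⟩
  · ext i j
    by_cases hij : i = j
    · subst hij
      simp
    · simp [hij, Ne.symm hij, Matrix.vecMulVec_apply, mul_comm]
  · have hquad : dotProduct (star w) (Matrix.mulVec (c • Matrix.diagonal φ -
        (1 - (∑ i, v i ^ 2)⁻¹ • Matrix.vecMulVec v v)) w) =
        c * ∑ i, φ i * w i ^ 2 - sqDistToLine v w := by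
      have hdiag : dotProduct w (Matrix.mulVec (Matrix.diagonal φ) w) = ∑ i, φ i * w i ^ 2 :=
        sum_congr rfl fun i _ => by rw [Matrix.mulVec_diagonal]; ring
      have hself : dotProduct w w = ∑ i, w i ^ 2 := sum_congr rfl fun i _ => (sq (w i)).symm
      rw [star_trivial, Matrix.sub_mulVec, Matrix.sub_mulVec, Matrix.smul_mulVec,
        Matrix.smul_mulVec, Matrix.one_mulVec, Matrix.vecMulVec_mulVec, dotProduct_sub,
        dotProduct_sub, dotProduct_smul, dotProduct_smul, dotProduct_smul, hdiag, hself,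
        dotProduct_comm w v, sqDistToLine]
      simp only [dotProduct, smul_eq_mul, op_smul_eq_mul]
      ring
    rw [hquad]
    linarith [h w]

lemma sqDistToLine_nodes_le_of_mem_Ico (n : ℕ) {f p : ℝ → ℝ} {x₀ a C δ m y : ℝ}
    (hfnn : ∀ y, 0 ≤ f y) (ha : 0 < a) (hm : 0 < m) (hC : 0 ≤ C)
    (hδT : 2 * δ ≤ 2 * π / (n + 1))
    (hmf : ∀ z ∈ Set.Icc (x₀ + δ) (x₀ + 2 * π - δ), m ≤ f z)
    (hy : y ∈ Set.Ico (x₀ - δ) (x₀ - δ + 2 * π / (n + 1)))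
    (hnear : y < x₀ + δ → a ≤ p y ^ 2 ∧ ∑ i : Fin n, nodes (n + 1) p y i.succ ^ 2 ≤ C * f y)
    (w : Fin (n + 1) → ℝ) :
    sqDistToLine (nodes (n + 1) p y) w ≤
      (2 / m + 2 * C / a) * ∑ i, nodes (n + 1) f y i * w i ^ 2 := by
  have hmf_node (j : Fin (n + 1)) (hj : x₀ + δ ≤ y + 2 * π * j / (n + 1)) :
      m ≤ nodes (n + 1) f y j := by
    have hjn : (j : ℝ) ≤ n := by exact_mod_cast Nat.lt_succ_iff.mp j.isLt
    have : 2 * π * j / (n + 1) + 2 * π / (n + 1) ≤ 2 * π := by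
      rw [← add_div, div_le_iff₀ (by positivity)]
      nlinarith [pi_pos]
    refine hmf _ ⟨by push_cast; exact hj, ?_⟩
    push_cast
    linarith [hy.2]
  rcases lt_or_ge y (x₀ + δ) with hy_near | hy_far
  · obtain ⟨hpy, hsum⟩ := hnear hy_near
    have hv₀ : a ≤ nodes (n + 1) p y 0 ^ 2 := by simpa [nodes] using hpy
    have hφ₀ : nodes (n + 1) f y 0 = f y := by simp [nodes]
    have hφ_succ (i : Fin n) : m ≤ nodes (n + 1) f y i.succ := by
      refine hmf_node _ ?_
      have : 2 * π / (n + 1) ≤ 2 * π * (i.succ : ℕ) / (n + 1) :=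
        div_le_div_of_nonneg_right (le_mul_of_one_le_right (by positivity) (by simp))
          (by positivity)
      linarith [hy.1]
    rw [← hφ₀] at hsum
    exact sqDistToLine_le_of_pivot (φ := nodes (n + 1) f y) ha hm hC (fun i => hfnn _) hv₀
      hφ_succ hsum w
  · have hφ (j : Fin (n + 1)) : m ≤ nodes (n + 1) f y j := by
      refine hmf_node j ?_
      have : 0 ≤ 2 * π * (j : ℕ) / (n + 1) := by positivity
      linarith
    have hmK : m⁻¹ ≤ 2 / m + 2 * C / a := by
      have : 0 ≤ 2 * C / a := by positivity
      have : m⁻¹ ≤ 2 / m := by rw [div_eq_mul_inv]; linarith [inv_pos.2 hm]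
      linarith
    exact (sqDistToLine_le_of_forall_le hm hφ _ _).trans (mul_le_mul_of_nonneg_right hmK
      (sum_nonneg fun i _ => mul_nonneg (hfnn _) (sq_nonneg _)))

lemma exists_forall_sqDistToLine_nodes_le (n : ℕ) {f p : ℝ → ℝ} {x₀ a C : ℝ}
    (hfc : Continuous f) (hfper : Periodic f (2 * π)) (hpper : Periodic p (2 * π))
    (hfnn : ∀ y, 0 ≤ f y) (hfpos : ∀ y ∈ Set.Ioo x₀ (x₀ + 2 * π), 0 < f y) (ha : 0 < a)
    (hC : 0 ≤ C)
    (hnear : ∀ᶠ x in 𝓝 x₀, a ≤ p x ^ 2 ∧ ∑ i : Fin n, nodes (n + 1) p x i.succ ^ 2 ≤ C * f x) :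
    ∃ K > 0, ∀ x w,
      sqDistToLine (nodes (n + 1) p x) w ≤ K * ∑ i, nodes (n + 1) f x i * w i ^ 2 := by
  obtain ⟨ε, hε, hεnear⟩ := Metric.eventually_nhds_iff.1 hnear
  set δ := min (ε / 2) (π / (n + 1))
  have hδ : 0 < δ := by positivity
  have hδT : 2 * δ ≤ 2 * π / (n + 1) := by
    rw [mul_div_assoc]
    exact mul_le_mul_of_nonneg_left (min_le_right _ _) zero_le_two
  obtain ⟨m, hm, hmf⟩ := isCompact_Icc.exists_forall_le' (a := 0) hfc.continuousOn
    fun y (hy : y ∈ Set.Icc (x₀ + δ) (x₀ + 2 * π - δ)) =>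
      hfpos y ⟨by linarith [hy.1], by linarith [hy.2]⟩
  refine ⟨2 / m + 2 * C / a, by positivity, fun x => ?_⟩
  have hP : Periodic (fun x => ∀ w, sqDistToLine (nodes (n + 1) p x) w ≤
      (2 / m + 2 * C / a) * ∑ i, nodes (n + 1) f x i * w i ^ 2) (2 * π / (n + 1)) :=
    fun x => propext <| by
      simp only [nodes_add_period hpper, nodes_add_period hfper]
      exact forall_sqDistToLine_le_comp_equiv_iff _ _ _ _
  obtain ⟨y, hy, hxy⟩ := hP.exists_mem_Ico (by positivity) x (x₀ - δ)
  refine Eq.mpr hxy fun w => sqDistToLine_nodes_le_of_mem_Ico n hfnn ha hm hC hδT hmf hy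
    (fun hy_near => hεnear ?_) w
  rw [Real.dist_eq, abs_lt]
  constructor <;> linarith [hy.1, min_le_left (ε / 2) (π / (n + 1))]

theorem stmt17_general (g : ℕ) (f p : ℝ → ℝ) (x₀ : ℝ)
    (hx₀ : x₀ ∈ Set.Ico (0 : ℝ) (2 * π))
    (hftrig : ∃ (d : ℕ) (a : ℤ → ℂ), ∀ x : ℝ,
      (f x : ℂ) = ∑ j ∈ Finset.Icc (-(d : ℤ)) (d : ℤ), a j * Complex.exp (Complex.I * (j : ℂ) * x))
    (hptrig : ∃ (d : ℕ) (a : ℤ → ℂ), ∀ x : ℝ,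
      (p x : ℂ) = ∑ j ∈ Finset.Icc (-(d : ℤ)) (d : ℤ), a j * Complex.exp (Complex.I * (j : ℂ) * x))
    (hf0 : f x₀ = 0)
    (hfpos : ∀ x ∈ Set.Ico (0 : ℝ) (2 * π), x ≠ x₀ → 0 < f x)
    (hi : ∀ j : ℕ, 1 ≤ j → j < g → ∃ c : ℝ,
      Tendsto (fun x => p (x + 2 * π * j / g) ^ 2 / f x) (nhdsWithin x₀ {x₀}ᶜ) (nhds c))
    (hii : 0 < p x₀ ^ 2) :
    ∃ γ : ℝ, 0 < γ ∧ ∀ x ∈ Set.Ico (0 : ℝ) (2 * π),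
      let v : Fin g → ℝ := fun j => p (x + 2 * π * ((j : ℕ) : ℝ) / g)
      let fv : Fin g → ℝ := fun j => f (x + 2 * π * ((j : ℕ) : ℝ) / g)
      let a₀ : ℝ := (1 / (2 * π)) * ∫ t in (0 : ℝ)..(2 * π), f t
      ((γ / a₀) • Matrix.diagonal fv -
        ((1 : Matrix (Fin g) (Fin g) ℝ) - (∑ j, v j ^ 2)⁻¹ • Matrix.vecMulVec v v)).PosSemidef := by
  obtain ⟨_, _, hf⟩ := hftrig
  obtain ⟨_, _, hp⟩ := hptrig
  have hfc := continuous_of_ofReal_eq_sum_exp hf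
  have hfper := periodic_of_ofReal_eq_sum_exp hf
  have hpc := continuous_of_ofReal_eq_sum_exp hp
  have hpper := periodic_of_ofReal_eq_sum_exp hp
  have hfpos' : ∀ y ∈ Set.Ioo x₀ (x₀ + 2 * π), 0 < f y := fun y =>
    hfper.pos_of_mem_Ioo two_pi_pos hx₀ hfpos
  have hfnn := hfper.nonneg_of_pos_on_Ioo two_pi_pos hf0 hfpos'
  rcases g with _ | n
  · exact ⟨1, one_pos, fun x _ =>
      posSemidef_of_forall_sqDistToLine_le fun w => by simp [sqDistToLine]⟩
  obtain ⟨C, hC, hCf⟩ := exists_eventually_sum_le_mul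
    (u := fun (i : Fin n) x => nodes (n + 1) p x i.succ ^ 2)
    (fun i => by simp only [nodes]; fun_prop)
    hfc.continuousAt (hfper.eventually_pos_nhdsNE two_pi_pos hfpos')
    (fun i => hi (i + 1) (by omega) (by omega))
  have hpx₀ : ∀ᶠ x in 𝓝 x₀, p x₀ ^ 2 / 2 ≤ p x ^ 2 :=
    ((hpc.pow 2).tendsto x₀).eventually (Ici_mem_nhds (half_lt_self hii))
  obtain ⟨K, hK, hKf⟩ := exists_forall_sqDistToLine_nodes_le n hfc hfper hpper hfnn hfpos'
    (half_pos hii) hC.le (hpx₀.and hCf)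
  set a₀ := (1 / (2 * π)) * ∫ t in (0 : ℝ)..(2 * π), f t
  have ha₀ : 0 < a₀ := mul_pos (one_div_pos.2 two_pi_pos) (hfper.integral_pos two_pi_pos hfc hfpos')
  refine ⟨K * a₀, mul_pos hK ha₀, fun x _ => ?_⟩
  intro v fv a₀'
  rw [show K * a₀ / a₀' = K from mul_div_cancel_right₀ K ha₀.ne']
  exact posSemidef_of_forall_sqDistToLine_le (hKf x)

theorem stmt17 (g : ℕ) (hg : 2 ≤ g) (f p : ℝ → ℝ) (x₀ : ℝ)
    (hx₀ : x₀ ∈ Set.Ico (0 : ℝ) (2 * π))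
    (hftrig : ∃ (d : ℕ) (a : ℤ → ℂ), ∀ x : ℝ,
      (f x : ℂ) = ∑ j ∈ Finset.Icc (-(d : ℤ)) (d : ℤ), a j * Complex.exp (Complex.I * (j : ℂ) * x))
    (hptrig : ∃ (d : ℕ) (a : ℤ → ℂ), ∀ x : ℝ,
      (p x : ℂ) = ∑ j ∈ Finset.Icc (-(d : ℤ)) (d : ℤ), a j * Complex.exp (Complex.I * (j : ℂ) * x))
    (hf0 : f x₀ = 0)
    (hfpos : ∀ x ∈ Set.Ico (0 : ℝ) (2 * π), x ≠ x₀ → 0 < f x)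
    (hi : ∀ j : ℕ, 1 ≤ j → j < g → ∃ c : ℝ,
      Tendsto (fun x => p (x + 2 * π * j / g) ^ 2 / f x) (nhdsWithin x₀ {x₀}ᶜ) (nhds c))
    (hii : 0 < p x₀ ^ 2) :
    ∃ γ : ℝ, 0 < γ ∧ ∀ x ∈ Set.Ico (0 : ℝ) (2 * π),
      let v : Fin g → ℝ := fun j => p (x + 2 * π * ((j : ℕ) : ℝ) / g)
      let fv : Fin g → ℝ := fun j => f (x + 2 * π * ((j : ℕ) : ℝ) / g)
      let a₀ : ℝ := (1 / (2 * π)) * ∫ t in (0 : ℝ)..(2 * π), f t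
      ((γ / a₀) • Matrix.diagonal fv -
        ((1 : Matrix (Fin g) (Fin g) ℝ) - (∑ j, v j ^ 2)⁻¹ • Matrix.vecMulVec v v)).PosSemidef :=
  stmt17_general g f p x₀ hx₀ hftrig hptrig hf0 hfpos hi hii
end

section
/- Let p be a trigonometric polynomial, g ≥ 2, x ∈ [0, 2π), and suppose p(y) = 0 for every y ∈ Ω_g(x) = {x + 2πj/g mod 2π : j = 0, …, g-1}. Let Θ = min over y ∈ Ω_g(x) of the order of the zero of p at y. Then h(x') = ∑_{j=0}^{g-1}|p(x' + 2πj/g)|² has a zero of order exactly 2Θ at x' = x, and for each s, h_s(x') = ∑_{j≠s}|p(x' + 2πj/g)|² has a zero of order at least 2Θ at x' = x. -/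
/-!
Each summand `t ↦ p (t + 2πj/g) ^ 2` is the square of a smooth function vanishing to order at
least `Θ` at `x`, so by the Leibniz rule its derivatives of order `< 2Θ` vanish there, while its
derivative of order `2Θ` is `C(2Θ, Θ) · (p⁽ᶿ⁾(x + 2πj/g))²`. These are nonnegative and, by the
minimality of `Θ`, one of them is positive, so in the full sum no cancellation can occur.
-/

open Real Finset
open scoped ContDiff

theorem contDiff_of_ofReal_eq_sum_exp {p : ℝ → ℝ} {s : Finset ℤ} {a : ℤ → ℂ}
    (hp : ∀ x : ℝ, (p x : ℂ) = ∑ j ∈ s, a j * Complex.exp (Complex.I * (j : ℂ) * x)) :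
    ContDiff ℝ ∞ p := by
  have hsum : ContDiff ℝ ∞ fun x : ℝ => ∑ j ∈ s, a j * Complex.exp (Complex.I * (j : ℂ) * x) :=
    ContDiff.sum fun j _ => contDiff_const.mul <| Complex.contDiff_exp.comp <|
      contDiff_const.mul Complex.ofRealCLM.contDiff
  have hre : p = fun x : ℝ => (∑ j ∈ s, a j * Complex.exp (Complex.I * (j : ℂ) * x)).re := by
    funext x
    rw [← hp x, Complex.ofReal_re]
  rw [hre]
  exact Complex.reCLM.contDiff.comp hsum

section SquareVanishingOrder

variable {𝕜 : Type*} [NontriviallyNormedField 𝕜] {f : 𝕜 → 𝕜} {x : 𝕜} {n : ℕ}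

theorem iteratedDeriv_sq_eq_sum (m : ℕ) (hf : ContDiffAt 𝕜 m f x) :
    iteratedDeriv m (fun t => f t ^ 2) x = ∑ k ∈ range (m + 1),
      m.choose k * iteratedDeriv k f x * iteratedDeriv (m - k) f x := by
  simp_rw [sq]
  exact iteratedDeriv_fun_mul hf hf

theorem iteratedDeriv_mul_iteratedDeriv_eq_zero (hvan : ∀ k < n, iteratedDeriv k f x = 0)
    {k l : ℕ} (hkl : k + l ≤ 2 * n) (hne : k ≠ n) :
    iteratedDeriv k f x * iteratedDeriv l f x = 0 := by
  rcases lt_or_gt_of_ne hne with hk | hk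
  · rw [hvan k hk, zero_mul]
  · rw [hvan l (by omega), mul_zero]

theorem iteratedDeriv_sq_eq_zero_of_lt (hvan : ∀ k < n, iteratedDeriv k f x = 0)
    {m : ℕ} (hm : m < 2 * n) (hf : ContDiffAt 𝕜 m f x) :
    iteratedDeriv m (fun t => f t ^ 2) x = 0 := by
  rw [iteratedDeriv_sq_eq_sum m hf]
  refine sum_eq_zero fun k hk => ?_
  have hkm : k ≤ m := Nat.lt_succ_iff.mp (mem_range.mp hk)
  by_cases hkn : k = n
  · rw [mul_assoc, hvan (m - k) (by omega), mul_zero, mul_zero]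
  · rw [mul_assoc, iteratedDeriv_mul_iteratedDeriv_eq_zero hvan (by omega) hkn, mul_zero]

theorem iteratedDeriv_two_mul_sq (hvan : ∀ k < n, iteratedDeriv k f x = 0)
    (hf : ContDiffAt 𝕜 (2 * n : ℕ) f x) :
    iteratedDeriv (2 * n) (fun t => f t ^ 2) x = (2 * n).choose n * iteratedDeriv n f x ^ 2 := by
  rw [iteratedDeriv_sq_eq_sum (2 * n) hf, sum_eq_single n]
  · rw [show 2 * n - n = n by omega, mul_assoc, sq]
  · intro k hk hkn
    have hk' : k ≤ 2 * n := Nat.lt_succ_iff.mp (mem_range.mp hk)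
    rw [mul_assoc, iteratedDeriv_mul_iteratedDeriv_eq_zero hvan (by omega) hkn, mul_zero]
  · exact fun h => absurd (mem_range.mpr (by omega)) h

end SquareVanishingOrder

theorem stmt18_general (g : ℕ) (p : ℝ → ℝ)
    (htrig : ∃ (d : ℕ) (a : ℤ → ℂ), ∀ x : ℝ,
      (p x : ℂ) = ∑ j ∈ Finset.Icc (-(d : ℤ)) (d : ℤ), a j * Complex.exp (Complex.I * (j : ℂ) * x))
    (x : ℝ) (Θ : ℕ)
    (hzero : ∀ j < g, ∀ μ < Θ, iteratedDeriv μ p (x + 2 * π * j / g) = 0)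
    (hmin : ∃ j < g, iteratedDeriv Θ p (x + 2 * π * j / g) ≠ 0) :
    (∀ μ < 2 * Θ,
      iteratedDeriv μ (fun t => ∑ j ∈ Finset.range g, p (t + 2 * π * j / g) ^ 2) x = 0) ∧
    iteratedDeriv (2 * Θ) (fun t => ∑ j ∈ Finset.range g, p (t + 2 * π * j / g) ^ 2) x ≠ 0 ∧
    ∀ s < g, ∀ μ < 2 * Θ,
      iteratedDeriv μ
        (fun t => ∑ j ∈ (Finset.range g).erase s, p (t + 2 * π * j / g) ^ 2) x = 0 := by
  obtain ⟨d, a, ha⟩ := htrig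
  set q : ℕ → ℝ → ℝ := fun j t => p (t + 2 * π * j / g)
  have hq : ∀ j (m : ℕ), ContDiff ℝ m (q j) := fun j m =>
    (contDiff_infty.mp (contDiff_of_ofReal_eq_sum_exp ha) m).comp (contDiff_id.add contDiff_const)
  have hqsq : ∀ j (m : ℕ), ContDiff ℝ m fun t => q j t ^ 2 := fun j m => (hq j m).pow 2
  have hqzero : ∀ j < g, ∀ μ < Θ, iteratedDeriv μ (q j) x = 0 := fun j hj μ hμ => by
    simpa only [q, iteratedDeriv_comp_add_const] using hzero j hj μ hμ
  have hsub : ∀ s ⊆ range g, ∀ μ < 2 * Θ, iteratedDeriv μ (fun t => ∑ j ∈ s, q j t ^ 2) x = 0 :=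
    fun s hs μ hμ => by
      rw [iteratedDeriv_fun_sum fun j _ => (hqsq j μ).contDiffAt]
      exact sum_eq_zero fun j hj =>
        iteratedDeriv_sq_eq_zero_of_lt (hqzero j (mem_range.mp (hs hj))) hμ (hq j μ).contDiffAt
  refine ⟨hsub _ subset_rfl, ?_, fun s _ => hsub _ (erase_subset s _)⟩
  obtain ⟨j₀, hj₀, hne⟩ := hmin
  have hval : ∀ j ∈ range g, iteratedDeriv (2 * Θ) (fun t => q j t ^ 2) x =
      (2 * Θ).choose Θ * iteratedDeriv Θ p (x + 2 * π * j / g) ^ 2 := fun j hj => by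
    rw [iteratedDeriv_two_mul_sq (hqzero j (mem_range.mp hj)) (hq j _).contDiffAt,
      iteratedDeriv_comp_add_const]
  rw [iteratedDeriv_fun_sum fun j _ => (hqsq j _).contDiffAt, sum_congr rfl hval]
  have hchoose : (0 : ℝ) < (2 * Θ).choose Θ := by exact_mod_cast Nat.choose_pos (by omega)
  exact (sum_pos' (fun j _ => by positivity) ⟨j₀, mem_range.mpr hj₀, by positivity⟩).ne'

theorem stmt18 (g : ℕ) (hg : 2 ≤ g) (p : ℝ → ℝ)
    (htrig : ∃ (d : ℕ) (a : ℤ → ℂ), ∀ x : ℝ,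
      (p x : ℂ) = ∑ j ∈ Finset.Icc (-(d : ℤ)) (d : ℤ), a j * Complex.exp (Complex.I * (j : ℂ) * x))
    (x : ℝ) (hx : x ∈ Set.Ico (0 : ℝ) (2 * π)) (Θ : ℕ)
    (hp0 : ∀ j < g, p (x + 2 * π * j / g) = 0)
    (hzero : ∀ j < g, ∀ μ < Θ, iteratedDeriv μ p (x + 2 * π * j / g) = 0)
    (hmin : ∃ j < g, iteratedDeriv Θ p (x + 2 * π * j / g) ≠ 0) :
    (∀ μ < 2 * Θ,
      iteratedDeriv μ (fun t => ∑ j ∈ Finset.range g, p (t + 2 * π * j / g) ^ 2) x = 0) ∧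
    iteratedDeriv (2 * Θ) (fun t => ∑ j ∈ Finset.range g, p (t + 2 * π * j / g) ^ 2) x ≠ 0 ∧
    ∀ s < g, ∀ μ < 2 * Θ,
      iteratedDeriv μ
        (fun t => ∑ j ∈ (Finset.range g).erase s, p (t + 2 * π * j / g) ^ 2) x = 0 :=
  stmt18_general g p htrig x Θ hzero hmin
end
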